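/- Let E be a finite set with |E| = s, let M ≥ 1 be an integer, and let S be a random subset of E such that |S| ≤ min{s, M} almost surely and such that, for every j, conditioned on |S| = j the set S is distributed uniformly over all j-element subsets of E. Let κ = Pr(|S| ≥ 3) and assume κ > 0. Let Δ be a family of 3-element subsets of E, let τ(S) be the number of members of Δ contained in S, and define the estimator ρ = 0 if |S| < 3, and ρ = (1/κ)·(s(s−1)(s−2))/(|S|(|S|−1)(|S|−2))·τ(S) if |S| ≥ 3. Then E[ρ] = |Δ|. -/

import Mathlib

/-!
Expand `τ(S)` as a sum over the triangles `T ∈ Δ` and exchange the sums: it suffices that each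
triangle contributes `1`. Conditioned on `|S| = j`, a fixed triangle lies in `S` with probability
`C(s-3, j-3) / C(s, j) = j(j-1)(j-2) / (s(s-1)(s-2))`, which the rescaling factor of `ρ` cancels,
so the contribution of `T` is `Pr(|S| ≥ 3) / κ = 1`.
-/

open Finset

theorem Nat.choose_mul_descFactorial {n k m : ℕ} (hmk : m ≤ k) :
    n.choose k * k.descFactorial m = n.descFactorial m * (n - m).choose (k - m) := by
  rw [descFactorial_eq_factorial_mul_choose, descFactorial_eq_factorial_mul_choose,
    mul_left_comm, choose_mul hmk, mul_assoc]

theorem Nat.cast_descFactorial_three {R : Type*} [CommRing R] (n : ℕ) :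
    (n.descFactorial 3 : R) = n * (n - 1) * (n - 2) := by
  rcases n with _ | _ | _ | n <;> simp [Nat.descFactorial]
  ring

namespace Finset

variable {α : Type*} [DecidableEq α]

theorem sum_powerset_filter_superset_apply_card {M : Type*} [AddCommMonoid M] (f : ℕ → M)
    {E T : Finset α} (hTE : T ⊆ E) :
    ∑ A ∈ E.powerset with T ⊆ A, f #A =
      ∑ i ∈ range (#E - #T + 1), (#E - #T).choose i • f (i + #T) := by
  rw [← card_sdiff_of_subset hTE, ← sum_powerset_apply_card]
  refine sum_nbij' (· \ T) (· ∪ T) ?_ ?_ ?_ ?_ ?_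
  · intro A hA
    simp only [mem_filter, mem_powerset] at hA ⊢
    exact sdiff_subset_sdiff hA.1 le_rfl
  · intro B hB
    simp only [mem_filter, mem_powerset] at hB ⊢
    exact ⟨union_subset (hB.trans sdiff_subset) hTE, subset_union_right⟩
  · intro A hA
    exact sdiff_union_of_subset (mem_filter.1 hA).2
  · intro B hB
    exact union_sdiff_cancel_right (sdiff_disjoint.mono_left (mem_powerset.1 hB))
  · intro A hA
    have hTA := (mem_filter.1 hA).2
    rw [card_sdiff_of_subset hTA, Nat.sub_add_cancel (card_le_card hTA)]

theorem sum_superset_div_choose_mul_descFactorial {K : Type*} [Field K] [CharZero K]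
    {E T : Finset α} (hTE : T ⊆ E) (q : ℕ → K) :
    ∑ A ∈ E.powerset with T ⊆ A,
      q #A / (#E).choose #A * ((#E).descFactorial #T / (#A).descFactorial #T) =
      ∑ j ∈ Icc #T #E, q j := by
  have hcard : #T ≤ #E := card_le_card hTE
  rw [sum_powerset_filter_superset_apply_card
    (fun j => q j / (#E).choose j * ((#E).descFactorial #T / j.descFactorial #T)) hTE,
    ← Ico_add_one_right_eq_Icc, sum_Ico_eq_sum_range]
  refine sum_congr (by congr 1; omega) fun i hi => ?_
  have hi : i + #T ≤ #E := by rw [mem_range] at hi; omega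
  have hchoose : ((#E).choose (i + #T) : K) ≠ 0 := by exact_mod_cast (Nat.choose_pos hi).ne'
  have hdesc : ((i + #T).descFactorial #T : K) ≠ 0 := by
    exact_mod_cast (Nat.descFactorial_pos.2 le_add_self).ne'
  have key : ((#E).choose (i + #T) * (i + #T).descFactorial #T : K) =
      (#E).descFactorial #T * (#E - #T).choose i := by
    have := Nat.choose_mul_descFactorial (n := #E) (le_add_self : #T ≤ i + #T)
    rw [Nat.add_sub_cancel] at this
    exact_mod_cast this
  rw [nsmul_eq_mul, add_comm #T i]
  field_simp
  linear_combination (-q (i + #T)) * key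

end Finset

theorem stmt12_general {α : Type*} [DecidableEq α] (E : Finset α) (s : ℕ)
    (hE : E.card = s)
    (q : ℕ → ℝ)
    (Δ : Finset (Finset α)) (hΔ : ∀ T ∈ Δ, T ⊆ E ∧ T.card = 3)
    (κ : ℝ) (hκ : κ = ∑ j ∈ Finset.Icc 3 s, q j) (hκpos : 0 < κ) :
    ∑ A ∈ E.powerset, (q A.card / (s.choose A.card : ℝ)) *
      (if A.card < 3 then 0 else
        (1 / κ) * ((s : ℝ) * ((s : ℝ) - 1) * ((s : ℝ) - 2) /
          ((A.card : ℝ) * ((A.card : ℝ) - 1) * ((A.card : ℝ) - 2))) *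
          ((Δ.filter (fun T => T ⊆ A)).card : ℝ))
      = (Δ.card : ℝ) := by
  subst hE
  set w : Finset α → Finset α → ℝ := fun T A =>
    q #A / (#E).choose #A * ((#E).descFactorial #T / (#A).descFactorial #T)
  have estimator_eq (A : Finset α) : q #A / (#E).choose #A *
      (if #A < 3 then 0 else
        1 / κ * ((#E : ℝ) * (#E - 1) * (#E - 2) / (#A * (#A - 1) * (#A - 2))) *
          #(Δ.filter (· ⊆ A))) = κ⁻¹ * ∑ T ∈ Δ with T ⊆ A, w T A := by
    have hw : ∀ T ∈ {T ∈ Δ | T ⊆ A},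
        w T A = q #A / (#E).choose #A * ((#E).descFactorial 3 / (#A).descFactorial 3) :=
      fun T hT => by rw [← (hΔ T (mem_filter.1 hT).1).2]
    rw [sum_congr rfl hw, sum_const, nsmul_eq_mul, ← Nat.cast_descFactorial_three,
      ← Nat.cast_descFactorial_three]
    -- for `#A < 3` the `else` branch is `0` as well, its denominator being `0`
    rw [ite_eq_right_iff.2 fun h => by
      rw [Nat.descFactorial_eq_zero_iff_lt.2 h, Nat.cast_zero, div_zero, mul_zero, zero_mul]]
    ring
  calc _ = ∑ A ∈ E.powerset, κ⁻¹ * ∑ T ∈ Δ with T ⊆ A, w T A :=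
        sum_congr rfl fun A _ => estimator_eq A
    _ = κ⁻¹ * ∑ T ∈ Δ, ∑ A ∈ E.powerset with T ⊆ A, w T A := by
      rw [← mul_sum, sum_comm' (t' := Δ) (s' := fun T => {A ∈ E.powerset | T ⊆ A})
        fun A T => by simp only [mem_filter]; tauto]
    _ = κ⁻¹ * ∑ T ∈ Δ, κ := by
      congr 1
      refine sum_congr rfl fun T hT => ?_
      rw [hκ, ← (hΔ T hT).2]
      exact sum_superset_div_choose_mul_descFactorial (hΔ T hT).1 q
    _ = #Δ := by
      rw [sum_const, nsmul_eq_mul]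
      field_simp

/-- Unbiasedness of the TRIÈST-FD estimator: let `S` be a random subset of a set `E` of
size `s`, whose size never exceeds `min{s, M}` and which, conditioned on its size `j`,
is uniform over the `j`-element subsets of `E` (so `Pr(S = A) = q(|A|)/C(s,|A|)` where
`q` is the distribution of `|S|`). With `κ = Pr(|S| ≥ 3) > 0`, the estimator `ρ`
(equal to `0` when `|S| < 3` and to `(1/κ)·s(s-1)(s-2)/(|S|(|S|-1)(|S|-2))·τ(S)`
otherwise) has expectation `|Δ|`. -/
theorem stmt12 {α : Type*} [DecidableEq α] (E : Finset α) (s M : ℕ)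
    (hE : E.card = s) (hM : 1 ≤ M)
    (q : ℕ → ℝ) (hq0 : ∀ j, 0 ≤ q j) (hqsupp : ∀ j, min s M < j → q j = 0)
    (hq1 : ∑ j ∈ Finset.range (s + 1), q j = 1)
    (Δ : Finset (Finset α)) (hΔ : ∀ T ∈ Δ, T ⊆ E ∧ T.card = 3)
    (κ : ℝ) (hκ : κ = ∑ j ∈ Finset.Icc 3 s, q j) (hκpos : 0 < κ) :
    ∑ A ∈ E.powerset, (q A.card / (s.choose A.card : ℝ)) *
      (if A.card < 3 then 0 else
        (1 / κ) * ((s : ℝ) * ((s : ℝ) - 1) * ((s : ℝ) - 2) /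
          ((A.card : ℝ) * ((A.card : ℝ) - 1) * ((A.card : ℝ) - 2))) *
          ((Δ.filter (fun T => T ⊆ A)).card : ℝ))
      = (Δ.card : ℝ) :=
  stmt12_general E s hE q Δ hΔ κ hκ hκpos
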